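/- arXiv:1708.01582 — 3 statements merged into one kernel-verified Lean document; each statement's English description precedes it below -/
import Mathlib

section
/- If σ = 0 and β = −λ_sig·I for some λ_sig ∈ ℝ, then for every q ≥ 1, every k ≥ 1 and all θ, ϑ ∈ ℝ^p, the contraction bound is attained with equality: W_q(π_k^θ, π_k^ϑ) = exp(−kΔλ_sig)·‖θ − ϑ‖. -/
open MeasureTheory Filter Matrix
open scoped ENNReal NNReal RealInnerProductSpace BigOperators

noncomputable section

abbrev Euc (p : ℕ) := EuclideanSpace ℝ (Fin p)

/-- A strictly positive function is log-concave. -/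
def IsLogConcave {p : ℕ} (f : Euc p → ℝ) : Prop :=
  ∀ u v : Euc p, ∀ c : ℝ, 0 ≤ c → c ≤ 1 →
    c * Real.log (f u) + (1 - c) * Real.log (f v) ≤ Real.log (f (c • u + (1 - c) • v))

/-- `μ` is the Gaussian measure on `ℝ^p` with mean `m` and covariance matrix `S`,
characterized through its one-dimensional marginals (a Dirac mass when `S = 0`). -/
def IsGaussianWith {p : ℕ} (μ : Measure (Euc p)) (m : Euc p)
    (S : Matrix (Fin p) (Fin p) ℝ) : Prop :=
  ∀ v : Euc p, μ.map (fun x => ⟪v, x⟫) =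
    ProbabilityTheory.gaussianReal ⟪v, m⟫ (Real.toNNReal (∑ i, ∑ j, v i * S i j * v j))

/-- The matrix exponential `e^{tβ}`. -/
def matExp {p : ℕ} (β : Matrix (Fin p) (Fin p) ℝ) (t : ℝ) : Matrix (Fin p) (Fin p) ℝ :=
  NormedSpace.exp (t • β)

/-- Mean of the transition distribution of the linear SDE:
`a_t + e^{βt} θ` with `a_t = e^{βt} ∫_0^t e^{-βs} α ds`. -/
def meanAt {p : ℕ} (α : Euc p) (β : Matrix (Fin p) (Fin p) ℝ) (t : ℝ) (θ : Euc p) : Euc p :=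
  WithLp.toLp 2 fun i => (matExp β t).mulVec (fun j => ∫ s in (0:ℝ)..t, (matExp β (-s)).mulVec α j) i
    + (matExp β t).mulVec θ i

/-- Covariance of the transition distribution:
`Σ_t = σ² ∫_0^t e^{β(t-s)} (e^{β(t-s)})ᵀ ds`. -/
def covAt {p : ℕ} (β : Matrix (Fin p) (Fin p) ℝ) (σ t : ℝ) : Matrix (Fin p) (Fin p) ℝ :=
  Matrix.of fun i j =>
    σ ^ 2 * ∫ s in (0:ℝ)..t, (matExp β (t - s) * (matExp β (t - s))ᵀ) i j

/-- The family `P` is the Gaussian transition kernel of the linear SDE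
`dθ_t = (α + β θ_t) dt + σ dB_t`. -/
def IsLinearSDEKernel {p : ℕ} (P : ℝ → Euc p → Measure (Euc p)) (α : Euc p)
    (β : Matrix (Fin p) (Fin p) ℝ) (σ : ℝ) : Prop :=
  ∀ t : ℝ, 0 < t → ∀ θ : Euc p, IsProbabilityMeasure (P t θ) ∧
    IsGaussianWith (P t θ) (meanAt α β t θ) (covAt β σ t)

/-- `phiAux P g n j = φ_{j, j+n}`. -/
def phiAux {p : ℕ} (P : Euc p → Measure (Euc p)) (g : ℕ → Euc p → ℝ) :
    ℕ → ℕ → Euc p → ℝ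
  | 0, j => g j
  | n + 1, j => fun θ => g j θ * ∫ ϑ, phiAux P g n (j + 1) ϑ ∂(P θ)

/-- `φ_{j,k}`, with `φ_{k,k} = g_k` and `φ_{j,k} = g_j ⬝ P_Δ φ_{j+1,k}`. -/
def phi {p : ℕ} (P : Euc p → Measure (Euc p)) (g : ℕ → Euc p → ℝ) (j k : ℕ) : Euc p → ℝ :=
  phiAux P g (k - j) j

/-- The reweighted Markov kernel `R_{j,k}(θ, dϑ) = P_Δ(θ,dϑ) φ_{j,k}(ϑ) / (P_Δ φ_{j,k})(θ)`. -/
def Rker {p : ℕ} (P : Euc p → Measure (Euc p)) (g : ℕ → Euc p → ℝ) (j k : ℕ)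
    (θ : Euc p) : Measure (Euc p) :=
  (ENNReal.ofReal (∫ ϑ, phi P g j k ϑ ∂(P θ)))⁻¹ •
    ((P θ).withDensity fun ϑ => ENNReal.ofReal (phi P g j k ϑ))

/-- The filtering distribution `π_k^θ = R_{1,k} R_{2,k} ⋯ R_{k,k}(θ, ⬝)`. -/
def filterPt {p : ℕ} (P : Euc p → Measure (Euc p)) (g : ℕ → Euc p → ℝ) (k : ℕ)
    (θ : Euc p) : Measure (Euc p) :=
  (List.range k).foldl (fun μ i => μ.bind (Rker P g (i + 1) k)) (Measure.dirac θ)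

/-- The order-`q` Wasserstein distance (valued in `ℝ≥0∞`). -/
def wassersteinDist {p : ℕ} (q : ℝ) (μ ν : Measure (Euc p)) : ℝ≥0∞ :=
  ⨅ (γ : Measure (Euc p × Euc p)) (_ : γ.map Prod.fst = μ) (_ : γ.map Prod.snd = ν),
    (∫⁻ x, (‖x.1 - x.2‖₊ : ℝ≥0∞) ^ q ∂γ) ^ (1 / q)

/-- `l` is the smallest (real) eigenvalue of `M`. -/
def IsSmallestEigenval {p : ℕ} (M : Matrix (Fin p) (Fin p) ℝ) (l : ℝ) : Prop :=
  l ∈ spectrum ℝ M ∧ ∀ x ∈ spectrum ℝ M, l ≤ x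

/-- `l` is the largest (real) eigenvalue of `M`. -/
def IsLargestEigenval {p : ℕ} (M : Matrix (Fin p) (Fin p) ℝ) (l : ℝ) : Prop :=
  l ∈ spectrum ℝ M ∧ ∀ x ∈ spectrum ℝ M, x ≤ l

/-- Assumption G: each `g_k` is positive, `C²` and strongly log-concave with constant `λ_g(k) ≥ 0`. -/
def AssumptionG {p : ℕ} (g : ℕ → Euc p → ℝ) (lg : ℕ → ℝ) : Prop :=
  ∀ k : ℕ, (∀ θ, 0 < g k θ) ∧ ContDiff ℝ 2 (g k) ∧ 0 ≤ lg k ∧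
    ∃ gt : Euc p → ℝ, (∀ θ, 0 < gt θ) ∧ IsLogConcave gt ∧
      ∀ θ, g k θ = Real.exp (-(lg k / 2) * ⟪θ, θ⟫) * gt θ

end

/-!
With `σ = 0` and `β = -λ I` the signal moves deterministically by the affine map
`m θ = a_Δ + e^{-λΔ} θ`. Reweighting a Dirac mass by a positive density gives back the same
Dirac mass, so every `R_{j,k}` is the transition of `m` and `π_k^θ = δ_{m^k θ}`. The only
coupling of two Dirac masses is their product, hence
`W_q(π_k^θ, π_k^ϑ) = ‖m^k θ - m^k ϑ‖ = e^{-kλΔ} ‖θ - ϑ‖`.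
-/

open Measure

theorem Function.iterate_sub_eq_pow_smul {R M : Type*} [Monoid R] [AddCommGroup M]
    [DistribMulAction R M] {f : M → M} {e : R} (hf : ∀ x y, f x - f y = e • (x - y))
    (n : ℕ) (x y : M) : f^[n] x - f^[n] y = e ^ n • (x - y) := by
  induction n with
  | zero => simp
  | succ n ih =>
    rw [Function.iterate_succ_apply', Function.iterate_succ_apply', hf, ih, smul_smul, pow_succ']

lemma matExp_smul_one {p : ℕ} (c t : ℝ) :
    matExp (c • (1 : Matrix (Fin p) (Fin p) ℝ)) t = Real.exp (t * c) • 1 := by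
  rw [matExp, smul_smul, Matrix.smul_one_eq_diagonal, Matrix.exp_diagonal,
    Matrix.smul_one_eq_diagonal]
  congr 1
  funext i
  rw [Pi.exp_def, ← Real.exp_eq_exp_ℝ]

lemma meanAt_smul_one_sub {p : ℕ} (α : Euc p) (c t : ℝ) (θ ϑ : Euc p) :
    meanAt α (c • 1) t θ - meanAt α (c • 1) t ϑ = Real.exp (t * c) • (θ - ϑ) := by
  ext i
  simp [meanAt, matExp_smul_one, Matrix.smul_mulVec, mul_sub]

lemma measurable_meanAt {p : ℕ} (α : Euc p) (β : Matrix (Fin p) (Fin p) ℝ) (t : ℝ) :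
    Measurable (meanAt α β t) := by
  unfold meanAt
  fun_prop

lemma lintegral_of_map_fst_eq_dirac_of_map_snd_eq_dirac {α β : Type*}
    [MeasurableSpace α] [MeasurableSingletonClass α] [MeasurableSpace β]
    [MeasurableSingletonClass β] {γ : Measure (α × β)} {a : α} {b : β}
    (h₁ : γ.map Prod.fst = dirac a) (h₂ : γ.map Prod.snd = dirac b) (f : α × β → ℝ≥0∞) :
    ∫⁻ x, f x ∂γ = f (a, b) := by
  have hfst : ∀ᵐ x ∂γ, x.1 = a :=
    ae_of_ae_map (p := (· = a)) measurable_fst.aemeasurable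
      (by rw [h₁, ae_dirac_eq]; exact Filter.eventually_pure.2 rfl)
  have hsnd : ∀ᵐ x ∂γ, x.2 = b :=
    ae_of_ae_map (p := (· = b)) measurable_snd.aemeasurable
      (by rw [h₂, ae_dirac_eq]; exact Filter.eventually_pure.2 rfl)
  have huniv : γ Set.univ = 1 := by
    simpa [h₁] using (Measure.map_apply measurable_fst MeasurableSet.univ (μ := γ)).symm
  calc ∫⁻ x, f x ∂γ = ∫⁻ _, f (a, b) ∂γ :=
        lintegral_congr_ae (by filter_upwards [hfst, hsnd] with x h₁ h₂; rw [← h₁, ← h₂])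
    _ = f (a, b) := by rw [lintegral_const, huniv, mul_one]

lemma wassersteinDist_dirac {p : ℕ} {q : ℝ} (hq : q ≠ 0) (a b : Euc p) :
    wassersteinDist q (dirac a) (dirac b) = ‖a - b‖ₑ := by
  have hcost : ∀ γ : Measure (Euc p × Euc p), γ.map Prod.fst = dirac a →
      γ.map Prod.snd = dirac b →
      (∫⁻ x, (‖x.1 - x.2‖₊ : ℝ≥0∞) ^ q ∂γ) ^ (1 / q) = ‖a - b‖ₑ := fun γ h₁ h₂ => by
    rw [lintegral_of_map_fst_eq_dirac_of_map_snd_eq_dirac h₁ h₂, ← ENNReal.rpow_mul,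
      mul_one_div_cancel hq, ENNReal.rpow_one, enorm_eq_nnnorm]
  refine le_antisymm ?_ (le_iInf₂ fun γ h₁ => le_iInf fun h₂ => (hcost γ h₁ h₂).ge)
  have h₁ : (dirac (a, b)).map Prod.fst = dirac a := map_dirac' measurable_fst _
  have h₂ : (dirac (a, b)).map Prod.snd = dirac b := map_dirac' measurable_snd _
  exact iInf₂_le_of_le _ h₁ (iInf_le_of_le h₂ (hcost _ h₁ h₂).le)

lemma foldl_bind_dirac {α : Type*} [MeasurableSpace α] {m : α → α} {κ : ℕ → α → Measure α}
    (hm : Measurable m) (hκ : ∀ i, κ i = fun x => dirac (m x)) (l : List ℕ) (θ : α) :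
    l.foldl (fun μ i => μ.bind (κ i)) (dirac θ) = dirac (m^[l.length] θ) := by
  induction l generalizing θ with
  | nil => rfl
  | cons i l ih =>
    rw [List.foldl_cons, hκ, dirac_bind (f := fun x => dirac (m x)) (measurable_dirac.comp hm),
      ih, List.length_cons, Function.iterate_succ_apply]

section DiracKernel

variable {p : ℕ} {g : ℕ → Euc p → ℝ} {m : Euc p → Euc p}

lemma phiAux_dirac_pos (hg : ∀ k θ, 0 < g k θ) (n j : ℕ) (θ : Euc p) :
    0 < phiAux (fun x => dirac (m x)) g n j θ := by
  induction n generalizing j θ with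
  | zero => exact hg j θ
  | succ n ih =>
    simp only [phiAux, integral_dirac]
    exact mul_pos (hg j θ) (ih _ _)

lemma Rker_dirac (hg : ∀ k θ, 0 < g k θ) (j k : ℕ) :
    Rker (fun x => dirac (m x)) g j k = fun θ => dirac (m θ) := by
  funext θ
  have hpos := ENNReal.ofReal_pos.2 (phiAux_dirac_pos (m := m) hg (k - j) j (m θ))
  rw [Rker, phi, integral_dirac, dirac_withDensity, smul_smul,
    ENNReal.inv_mul_cancel hpos.ne' ENNReal.ofReal_ne_top, one_smul]

lemma filterPt_dirac (hm : Measurable m) (hg : ∀ k θ, 0 < g k θ) (k : ℕ) (θ : Euc p) :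
    filterPt (fun x => dirac (m x)) g k θ = dirac (m^[k] θ) := by
  rw [filterPt, foldl_bind_dirac hm (fun i => Rker_dirac hg (i + 1) k), List.length_range]

end DiracKernel

theorem filter_wasserstein_equality_deterministic_signal_general
    {p : ℕ} (Δ : ℝ) (hΔ : 0 < Δ) (α : Euc p) (lsig : ℝ)
    (P : ℝ → Euc p → Measure (Euc p))
    (hP : ∀ t : ℝ, 0 < t → ∀ θ : Euc p,
      P t θ = Measure.dirac (meanAt α ((-lsig) • (1 : Matrix (Fin p) (Fin p) ℝ)) t θ))
    (g : ℕ → Euc p → ℝ) (hgpos : ∀ k θ, 0 < g k θ) :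
    ∀ q : ℝ, 1 ≤ q → ∀ k : ℕ, 1 ≤ k → ∀ θ ϑ : Euc p,
      wassersteinDist q (filterPt (P Δ) g k θ) (filterPt (P Δ) g k ϑ) =
        ENNReal.ofReal (Real.exp (-(k * Δ * lsig)) * ‖θ - ϑ‖) := by
  intro q hq k _ θ ϑ
  have hPΔ : P Δ = fun x => dirac (meanAt α ((-lsig) • 1) Δ x) := funext (hP Δ hΔ)
  have hexp : Real.exp (Δ * -lsig) ^ k = Real.exp (-(k * Δ * lsig)) := by
    rw [← Real.exp_nat_mul]
    congr 1
    ring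
  have hm := measurable_meanAt α ((-lsig) • 1) Δ
  rw [hPΔ, filterPt_dirac hm hgpos, filterPt_dirac hm hgpos, wassersteinDist_dirac (by linarith),
    Function.iterate_sub_eq_pow_smul (meanAt_smul_one_sub α _ Δ), ← ofReal_norm, norm_smul,
    Real.norm_of_nonneg (by positivity), hexp]

/-- When `σ = 0` and `β = -λ_sig I` the contraction bound is attained with equality. -/
theorem filter_wasserstein_equality_deterministic_signal
    {p : ℕ} (Δ : ℝ) (hΔ : 0 < Δ) (α : Euc p) (lsig : ℝ)
    (P : ℝ → Euc p → Measure (Euc p))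
    (hP : ∀ t : ℝ, 0 < t → ∀ θ : Euc p,
      P t θ = Measure.dirac (meanAt α ((-lsig) • (1 : Matrix (Fin p) (Fin p) ℝ)) t θ))
    (g : ℕ → Euc p → ℝ) (hgm : ∀ k, Measurable (g k)) (hgpos : ∀ k θ, 0 < g k θ) :
    ∀ q : ℝ, 1 ≤ q → ∀ k : ℕ, 1 ≤ k → ∀ θ ϑ : Euc p,
      wassersteinDist q (filterPt (P Δ) g k θ) (filterPt (P Δ) g k ϑ) =
        ENNReal.ofReal (Real.exp (-(k * Δ * lsig)) * ‖θ - ϑ‖) :=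
  filter_wasserstein_equality_deterministic_signal_general Δ hΔ α lsig P hP g hgpos
end

section
/- Let Δ > 0, α ∈ ℝ^p, β a p×p real matrix, σ ≥ 0, let λ_sig be the smallest eigenvalue of −(β+βᵀ)/2, let λ_h : [0,Δ] → [0,∞) be continuous, and let b : ℝ^p×[0,Δ] → ℝ^p be such that for every s ∈ [0,Δ] and all u, v ∈ ℝ^p, (b(u,s) − b(v,s))ᵀ(u − v) ≤ −λ_h(s)‖u − v‖². Let w : [0,Δ] → ℝ^p be continuous and let θ, ϑ : [0,Δ] → ℝ^p be continuous paths satisfying the integral equations θ_t = θ_0 + ∫_0^t (α + βθ_s + σ²·b(θ_s,s)) ds + σ·w(t) and ϑ_t = ϑ_0 + ∫_0^t (α + βϑ_s + σ²·b(ϑ_s,s)) ds + σ·w(t) for all t ∈ [0,Δ]. Then ‖θ_Δ − ϑ_Δ‖ ≤ exp(−∫_0^Δ (λ_sig + σ²λ_h(t)) dt)·‖θ_0 − ϑ_0‖. -/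
open MeasureTheory Filter Matrix
open scoped ENNReal NNReal RealInnerProductSpace BigOperators

/-!
The difference `e = θ - ϑ` of the two solutions no longer sees the common driving path: it is an
absolutely continuous path with `e' = β e + σ² (b(θ, ·) - b(ϑ, ·))` almost everywhere. The bound on
the spectrum of the symmetric part of `β` and the one-sided Lipschitz bound on `b` give
`⟪e', e⟫ ≤ -(λ_sig + σ² λ_h) ‖e‖²`, so `exp (2 ∫₀ᵗ (λ_sig + σ² λ_h)) ‖e t‖²` is absolutely
continuous with almost everywhere nonpositive derivative, hence nonincreasing.
-/

open Set

namespace AbsolutelyContinuousOnInterval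

variable {X Y : Type*} [PseudoMetricSpace X] [PseudoMetricSpace Y] {a b : ℝ}

theorem of_dist_le_mul {f : ℝ → X} {g : ℝ → Y} (hf : AbsolutelyContinuousOnInterval f a b)
    (K : ℝ) (h : ∀ x ∈ uIcc a b, ∀ y ∈ uIcc a b, dist (g x) (g y) ≤ K * dist (f x) (f y)) :
    AbsolutelyContinuousOnInterval g a b := by
  have hK : Tendsto (fun E : ℕ × (ℕ → ℝ × ℝ) ↦
      K * ∑ i ∈ Finset.range E.1, dist (f (E.2 i).1) (f (E.2 i).2))
      (totalLengthFilter ⊓ 𝓟 (disjWithin a b)) (nhds 0) := by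
    simpa using Tendsto.const_mul K (show Tendsto _ _ _ from hf)
  refine squeeze_zero' (Eventually.of_forall fun _ ↦ Finset.sum_nonneg fun _ _ ↦ dist_nonneg)
    ?_ hK
  filter_upwards [mem_inf_of_right (mem_principal_self _)] with E hE
  rw [Finset.mul_sum]
  exact Finset.sum_le_sum fun i hi ↦ h _ (hE.1 i hi).1 _ (hE.1 i hi).2

theorem _root_.LocallyLipschitz.comp_absolutelyContinuousOnInterval {F : Type*}
    [SeminormedAddCommGroup F] {f : ℝ → F} {g : F → Y}
    (hg : LocallyLipschitz g) (hf : AbsolutelyContinuousOnInterval f a b) :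
    AbsolutelyContinuousOnInterval (g ∘ f) a b := by
  obtain ⟨K, hK⟩ := (hg.locallyLipschitzOn (s := f '' uIcc a b)).exists_lipschitzOnWith_of_compact
    (isCompact_uIcc.image_of_continuousOn hf.continuousOn)
  exact hf.of_dist_le_mul K fun x hx y hy ↦
    hK.dist_le_mul _ (mem_image_of_mem f hx) _ (mem_image_of_mem f hy)

theorem le_of_ae_deriv_nonpos {f : ℝ → ℝ} (hf : AbsolutelyContinuousOnInterval f a b)
    (hab : a ≤ b) (hf' : ∀ᵐ x, x ∈ Ioc a b → deriv f x ≤ 0) : f b ≤ f a := by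
  rw [← sub_nonpos, ← hf.integral_deriv_eq_sub, intervalIntegral.integral_of_le hab]
  exact setIntegral_nonpos_of_ae_restrict ((ae_restrict_iff' measurableSet_Ioc).2 hf')

end AbsolutelyContinuousOnInterval

theorem IntervalIntegrable.absolutelyContinuousOnInterval_intervalIntegral'
    {E : Type*} [NormedAddCommGroup E] [NormedSpace ℝ E] {f : ℝ → E} {a b c : ℝ}
    (h : IntervalIntegrable f volume a b) (hc : c ∈ uIcc a b) :
    AbsolutelyContinuousOnInterval (fun x ↦ ∫ v in c..x, f v) a b := by
  refine (h.norm.absolutelyContinuousOnInterval_intervalIntegral hc).of_dist_le_mul 1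
    fun x hx y hy ↦ ?_
  have hcx : IntervalIntegrable f volume c x := h.mono_set (uIcc_subset_uIcc hc hx)
  have hcy : IntervalIntegrable f volume c y := h.mono_set (uIcc_subset_uIcc hc hy)
  rw [one_mul, dist_eq_norm, dist_eq_norm, intervalIntegral.integral_interval_sub_left hcx hcy,
    intervalIntegral.integral_interval_sub_left hcx.norm hcy.norm, Real.norm_eq_abs]
  exact intervalIntegral.norm_integral_le_abs_integral_norm

theorem exp_integral_mul_norm_sq_le_of_inner_le {E : Type*} [NormedAddCommGroup E]
    [InnerProductSpace ℝ E] [CompleteSpace E] {e G : ℝ → E} {k : ℝ → ℝ} {T : ℝ} (hT : 0 ≤ T)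
    (hG : IntervalIntegrable G volume 0 T) (hk : IntervalIntegrable k volume 0 T)
    (he : ∀ t ∈ Icc 0 T, e t = e 0 + ∫ s in 0..t, G s)
    (hGe : ∀ s ∈ Icc 0 T, ⟪G s, e s⟫ ≤ -k s * ‖e s‖ ^ 2) :
    Real.exp (2 * ∫ s in 0..T, k s) * ‖e T‖ ^ 2 ≤ ‖e 0‖ ^ 2 := by
  set K : ℝ → ℝ := fun t ↦ ∫ s in 0..t, k s
  set I : ℝ → E := fun t ↦ ∫ s in 0..t, G s
  set v : ℝ → ℝ := fun t ↦ Real.exp (2 * K t) * ‖e 0 + I t‖ ^ 2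
  have h0 : (0 : ℝ) ∈ uIcc 0 T := left_mem_uIcc
  have hK_ac : AbsolutelyContinuousOnInterval (fun t ↦ 2 * K t) 0 T :=
    (hk.absolutelyContinuousOnInterval_intervalIntegral h0).const_mul 2
  have hI_ac : AbsolutelyContinuousOnInterval I 0 T :=
    hG.absolutelyContinuousOnInterval_intervalIntegral' h0
  have hsq : LocallyLipschitz fun y : E ↦ ‖e 0 + y‖ ^ 2 :=
    ((contDiff_norm_sq ℝ).comp (contDiff_const.add contDiff_id)).locallyLipschitz
  have hv_ac : AbsolutelyContinuousOnInterval v 0 T :=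
    (Real.contDiff_exp.locallyLipschitz.comp_absolutelyContinuousOnInterval hK_ac).fun_mul
      (hsq.comp_absolutelyContinuousOnInterval hI_ac)
  have hv_deriv : ∀ᵐ t, t ∈ Ioc 0 T → deriv v t ≤ 0 := by
    filter_upwards [hG.ae_hasDerivAt_integral, hk.ae_hasDerivAt_integral] with t hGt hkt ht
    have htT : t ∈ uIcc 0 T := Ioc_subset_Icc_self.trans Icc_subset_uIcc ht
    have hI : HasDerivAt I (G t) t := hGt htT 0 h0
    have hK : HasDerivAt K (k t) t := hkt htT 0 h0
    have hv' : HasDerivAt v _ t := (hK.const_mul 2).exp.fun_mul (hI.const_add (e 0)).norm_sq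
    rw [hv'.deriv, ← he t (Ioc_subset_Icc_self ht), real_inner_comm]
    have := hGe t (Ioc_subset_Icc_self ht)
    have := Real.exp_pos (2 * K t)
    nlinarith
  simpa [v, K, I, ← he T (right_mem_Icc.2 hT)] using hv_ac.le_of_ae_deriv_nonpos hT hv_deriv

theorem norm_le_exp_neg_integral_mul_norm_of_inner_le {E : Type*} [NormedAddCommGroup E]
    [InnerProductSpace ℝ E] [CompleteSpace E] {e G : ℝ → E} {k : ℝ → ℝ} {T : ℝ} (hT : 0 ≤ T)
    (hG : IntervalIntegrable G volume 0 T) (hk : IntervalIntegrable k volume 0 T)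
    (he : ∀ t ∈ Icc 0 T, e t = e 0 + ∫ s in 0..t, G s)
    (hGe : ∀ s ∈ Icc 0 T, ⟪G s, e s⟫ ≤ -k s * ‖e s‖ ^ 2) :
    ‖e T‖ ≤ Real.exp (-∫ s in 0..T, k s) * ‖e 0‖ := by
  have hvT := exp_integral_mul_norm_sq_le_of_inner_le hT hG hk he hGe
  set κ := ∫ s in 0..T, k s
  have hexp : Real.exp (-κ) ^ 2 * Real.exp (2 * κ) = 1 := by
    rw [← Real.exp_nat_mul, ← Real.exp_add]
    simp
  rw [← sq_le_sq₀ (norm_nonneg _) (by positivity)]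
  calc ‖e T‖ ^ 2 = Real.exp (-κ) ^ 2 * (Real.exp (2 * κ) * ‖e T‖ ^ 2) := by
        rw [← mul_assoc, hexp, one_mul]
    _ ≤ Real.exp (-κ) ^ 2 * ‖e 0‖ ^ 2 := by gcongr
    _ = (Real.exp (-κ) * ‖e 0‖) ^ 2 := by ring

open scoped MatrixOrder in
theorem Matrix.IsHermitian.mul_norm_sq_le_inner_toEuclideanLin {n : Type*} [Fintype n]
    [DecidableEq n] {A : Matrix n n ℝ} (hA : A.IsHermitian) {l : ℝ}
    (hl : ∀ x ∈ spectrum ℝ A, l ≤ x) (x : EuclideanSpace ℝ n) :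
    l * ‖x‖ ^ 2 ≤ ⟪toEuclideanLin A x, x⟫ := by
  have hpsd : (A - algebraMap ℝ _ l).PosSemidef := algebraMap_le_of_le_spectrum hl hA
  have key := hpsd.dotProduct_mulVec_nonneg x.ofLp
  have hx : ‖x‖ ^ 2 = x.ofLp ⬝ᵥ x.ofLp := by
    rw [← real_inner_self_eq_norm_sq, EuclideanSpace.inner_eq_star_dotProduct, star_trivial]
  rw [hx]
  simpa [EuclideanSpace.inner_eq_star_dotProduct, Algebra.algebraMap_eq_smul_one, sub_mulVec,
    dotProduct_sub, smul_mulVec, dotProduct_smul] using key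

theorem Matrix.inner_toEuclideanLin_self_le {n : Type*} [Fintype n] [DecidableEq n]
    (β : Matrix n n ℝ) {l : ℝ} (hl : ∀ x ∈ spectrum ℝ (-((1:ℝ)/2) • (β + βᵀ)), l ≤ x)
    (x : EuclideanSpace ℝ n) : ⟪toEuclideanLin β x, x⟫ ≤ -l * ‖x‖ ^ 2 := by
  have hA : (-((1:ℝ)/2) • (β + βᵀ)).IsHermitian := by
    simp [IsHermitian, transpose_add, add_comm]
  have hT : ⟪toEuclideanLin βᵀ x, x⟫ = ⟪toEuclideanLin β x, x⟫ := by
    rw [← conjTranspose_eq_transpose_of_trivial, toEuclideanLin_conjTranspose_eq_adjoint,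
      LinearMap.adjoint_inner_left, real_inner_comm]
  have := hA.mul_norm_sq_le_inner_toEuclideanLin hl x
  simp only [map_smul, map_add, LinearMap.smul_apply, LinearMap.add_apply, real_inner_smul_left,
    inner_add_left, hT] at this
  linarith

theorem synchronous_coupling_contraction_general
    {p : ℕ} (Δ : ℝ) (hΔ : 0 < Δ) (α : Euc p) (β : Matrix (Fin p) (Fin p) ℝ)
    (σ : ℝ)
    (lsig : ℝ) (hsig : IsSmallestEigenval (-((1:ℝ)/2) • (β + βᵀ)) lsig)
    (lh : ℝ → ℝ) (hlhc : ContinuousOn lh (Set.Icc 0 Δ))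
    (b : Euc p → ℝ → Euc p)
    (hb : ∀ s ∈ Set.Icc (0:ℝ) Δ, ∀ u v : Euc p,
      ⟪b u s - b v s, u - v⟫ ≤ -lh s * ‖u - v‖ ^ 2)
    (w θ ϑ : ℝ → Euc p)
    (hθi : IntervalIntegrable
      (fun s => α + Matrix.toEuclideanLin β (θ s) + σ ^ 2 • b (θ s) s) volume 0 Δ)
    (hϑi : IntervalIntegrable
      (fun s => α + Matrix.toEuclideanLin β (ϑ s) + σ ^ 2 • b (ϑ s) s) volume 0 Δ)
    (hθeq : ∀ t ∈ Set.Icc (0:ℝ) Δ,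
      θ t = θ 0 + (∫ s in (0:ℝ)..t, (α + Matrix.toEuclideanLin β (θ s) + σ ^ 2 • b (θ s) s))
        + σ • w t)
    (hϑeq : ∀ t ∈ Set.Icc (0:ℝ) Δ,
      ϑ t = ϑ 0 + (∫ s in (0:ℝ)..t, (α + Matrix.toEuclideanLin β (ϑ s) + σ ^ 2 • b (ϑ s) s))
        + σ • w t) :
    ‖θ Δ - ϑ Δ‖ ≤ Real.exp (-(∫ t in (0:ℝ)..Δ, (lsig + σ ^ 2 * lh t))) * ‖θ 0 - ϑ 0‖ := by
  set e : ℝ → Euc p := fun t ↦ θ t - ϑ t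
  set G : ℝ → Euc p := fun s ↦ (α + Matrix.toEuclideanLin β (θ s) + σ ^ 2 • b (θ s) s)
    - (α + Matrix.toEuclideanLin β (ϑ s) + σ ^ 2 • b (ϑ s) s)
  have he : ∀ t ∈ Icc 0 Δ, e t = e 0 + ∫ s in 0..t, G s := fun t ht ↦ by
    have hsub : uIcc 0 t ⊆ uIcc 0 Δ := uIcc_subset_uIcc left_mem_uIcc (Icc_subset_uIcc ht)
    rw [intervalIntegral.integral_sub (hθi.mono_set hsub) (hϑi.mono_set hsub)]
    simp only [e, hθeq t ht, hϑeq t ht]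
    abel
  have hk : IntervalIntegrable (fun t ↦ lsig + σ ^ 2 * lh t) volume 0 Δ :=
    (continuousOn_const.add (continuousOn_const.mul hlhc)).intervalIntegrable_of_Icc hΔ.le
  have hGe : ∀ s ∈ Icc 0 Δ, ⟪G s, e s⟫ ≤ -(lsig + σ ^ 2 * lh s) * ‖e s‖ ^ 2 := fun s hs ↦ by
    have hG : G s = Matrix.toEuclideanLin β (e s) + σ ^ 2 • (b (θ s) s - b (ϑ s) s) := by
      simp only [G, e, map_sub, smul_sub]
      abel
    rw [hG, inner_add_left, real_inner_smul_left]
    have := mul_le_mul_of_nonneg_left (hb s hs (θ s) (ϑ s)) (sq_nonneg σ)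
    have := Matrix.inner_toEuclideanLin_self_le β hsig.2 (e s)
    linarith
  exact norm_le_exp_neg_integral_mul_norm_of_inner_le (e := e) (G := G) hΔ.le (hθi.sub hϑi) hk
    he hGe

/-- Deterministic synchronous-coupling contraction: two solutions of the controlled
integral equation driven by the same path `w` contract at rate `λ_sig + σ²λ_h(t)`. -/
theorem synchronous_coupling_contraction
    {p : ℕ} (Δ : ℝ) (hΔ : 0 < Δ) (α : Euc p) (β : Matrix (Fin p) (Fin p) ℝ)
    (σ : ℝ) (hσ : 0 ≤ σ)
    (lsig : ℝ) (hsig : IsSmallestEigenval (-((1:ℝ)/2) • (β + βᵀ)) lsig)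
    (lh : ℝ → ℝ) (hlhc : ContinuousOn lh (Set.Icc 0 Δ))
    (hlh0 : ∀ t ∈ Set.Icc (0:ℝ) Δ, 0 ≤ lh t)
    (b : Euc p → ℝ → Euc p)
    (hb : ∀ s ∈ Set.Icc (0:ℝ) Δ, ∀ u v : Euc p,
      ⟪b u s - b v s, u - v⟫ ≤ -lh s * ‖u - v‖ ^ 2)
    (w θ ϑ : ℝ → Euc p)
    (hw : ContinuousOn w (Set.Icc 0 Δ))
    (hθc : ContinuousOn θ (Set.Icc 0 Δ)) (hϑc : ContinuousOn ϑ (Set.Icc 0 Δ))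
    (hθi : IntervalIntegrable
      (fun s => α + Matrix.toEuclideanLin β (θ s) + σ ^ 2 • b (θ s) s) volume 0 Δ)
    (hϑi : IntervalIntegrable
      (fun s => α + Matrix.toEuclideanLin β (ϑ s) + σ ^ 2 • b (ϑ s) s) volume 0 Δ)
    (hθeq : ∀ t ∈ Set.Icc (0:ℝ) Δ,
      θ t = θ 0 + (∫ s in (0:ℝ)..t, (α + Matrix.toEuclideanLin β (θ s) + σ ^ 2 • b (θ s) s))
        + σ • w t)
    (hϑeq : ∀ t ∈ Set.Icc (0:ℝ) Δ,
      ϑ t = ϑ 0 + (∫ s in (0:ℝ)..t, (α + Matrix.toEuclideanLin β (ϑ s) + σ ^ 2 • b (ϑ s) s))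
        + σ • w t) :
    ‖θ Δ - ϑ Δ‖ ≤ Real.exp (-(∫ t in (0:ℝ)..Δ, (lsig + σ ^ 2 * lh t))) * ‖θ 0 - ϑ 0‖ :=
  synchronous_coupling_contraction_general Δ hΔ α β σ lsig hsig lh hlhc b hb w θ ϑ hθi hϑi hθeq hϑeq
end

section
/- Let (φ_k)_{k∈ℕ} be functions φ_k : ℝ^p → (0,∞) and (ς_k)_{k∈ℕ} constants in (0,∞) satisfying the eigenfunction relation Q_{k+1}φ_{k+1} = ς_k·φ_k for all k ≥ 0, where Q_k(θ,dϑ) := g_{k−1}(θ)P_Δ(θ,dϑ). Let μ be a probability measure on ℝ^p such that π_k^μ(P_Δφ_{k+1}) < ∞ for all k ≥ 0, and define π_{k,∞}^μ(A) := π_k^μ(1_A·P_Δφ_{k+1}) / π_k^μ(P_Δφ_{k+1}) and the Markov kernels R_{k,∞}(θ,dϑ) := P_Δ(θ,dϑ)φ_k(ϑ)/(P_Δφ_k)(θ). Then for every k ≥ 1, π_{k,∞}^μ = π_{0,∞}^μ R_{1,∞} R_{2,∞} ⋯ R_{k,∞}. -/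
open MeasureTheory Filter Matrix
open scoped ENNReal NNReal RealInnerProductSpace BigOperators

noncomputable section

/-- The unnormalized measure
`A ↦ ∫ 1_A(θ_k) ∏_{j=0}^k g_j(θ_j) μ(dθ_0) P(θ_0,dθ_1) ⋯ P(θ_{k-1},dθ_k)`. -/
def chainMeas {p : ℕ} (P : Euc p → Measure (Euc p)) (g : ℕ → Euc p → ℝ)
    (μ0 : Measure (Euc p)) : ℕ → Measure (Euc p)
  | 0 => μ0.withDensity fun x => ENNReal.ofReal (g 0 x)
  | k + 1 => ((chainMeas P g μ0 k).bind P).withDensity fun x => ENNReal.ofReal (g (k + 1) x)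

/-- The `μ`-initialized filtering distribution `π_k^μ`. -/
def filterM {p : ℕ} (P : Euc p → Measure (Euc p)) (g : ℕ → Euc p → ℝ)
    (μ : Measure (Euc p)) (k : ℕ) : Measure (Euc p) :=
  (chainMeas P g μ k Set.univ)⁻¹ • chainMeas P g μ k

/-- The reweighted probability measure `μ·φ / μφ`. -/
def reweight {p : ℕ} (φ : Euc p → ℝ) (μ : Measure (Euc p)) : Measure (Euc p) :=
  (∫⁻ x, ENNReal.ofReal (φ x) ∂μ)⁻¹ •
    μ.withDensity fun x => ENNReal.ofReal (φ x)

/-- The Markov kernel `R_{k,∞}(θ,dϑ) = P_Δ(θ,dϑ) φ_k(ϑ) / (P_Δ φ_k)(θ)`. -/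
def RinfKer {p : ℕ} (P : Euc p → Measure (Euc p)) (φ : ℕ → Euc p → ℝ) (k : ℕ)
    (θ : Euc p) : Measure (Euc p) :=
  (ENNReal.ofReal (∫ x, φ k x ∂(P θ)))⁻¹ •
    ((P θ).withDensity fun x => ENNReal.ofReal (φ k x))

/-! Write `N ν = ν(univ)⁻¹ • ν`, so that `π_k = N C_k` with `C_{k+1} = (C_k P) g_{k+1}`, and
`π_{k,∞} = N (C_k · Pφ_{k+1})`. Both sides of `π_{k+1,∞} = π_{k,∞} R_{k+1,∞}` equal
`N ((C_k P) φ_{k+1})`. On the left, `g_{k+1} · Pφ_{k+2} = ς_{k+1} φ_{k+1}` and `N` forgets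
constant factors. On the right, `R_{k+1,∞}` is the Doob transform of `P` by `φ_{k+1}`, so
reweighting by `Pφ_{k+1}` and then moving along `R_{k+1,∞}` is moving along `P` and reweighting
by `φ_{k+1}`. -/

namespace MeasureTheory.Measure

variable {α β : Type*} [MeasurableSpace α] [MeasurableSpace β]

/-- `μ` scaled to a probability measure; the junk value is `0` when `μ univ` is `0` or `∞`. -/
def normalize (μ : Measure α) : Measure α := (μ Set.univ)⁻¹ • μ

lemma normalize_smul {c : ℝ≥0∞} (hc0 : c ≠ 0) (hctop : c ≠ ∞) (μ : Measure α) :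
    (c • μ).normalize = μ.normalize := by
  rw [normalize, normalize, Measure.smul_apply, smul_eq_mul, smul_smul,
    ENNReal.mul_inv (Or.inl hc0) (Or.inl hctop), mul_right_comm,
    ENNReal.inv_mul_cancel hc0 hctop, one_mul]

lemma normalize_withDensity_normalize {μ : Measure α} (hμ : μ Set.univ ≠ ∞) (f : α → ℝ≥0∞) :
    (μ.normalize.withDensity f).normalize = (μ.withDensity f).normalize := by
  rcases eq_or_ne μ 0 with rfl | hμ0
  · simp [normalize]
  rw [show μ.normalize = (μ Set.univ)⁻¹ • μ from rfl, withDensity_smul_measure,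
    normalize_smul (ENNReal.inv_ne_zero.2 hμ) (ENNReal.inv_ne_top.2 (measure_univ_ne_zero.2 hμ0))]

lemma normalize_withDensity_withDensity_of_mul_eq_smul {ν : Measure α} {f g h : α → ℝ≥0∞}
    {c : ℝ≥0∞} (hf : Measurable f) (hg : Measurable g) (hh : Measurable h) (hc0 : c ≠ 0)
    (hctop : c ≠ ∞) (hfg : f * g = c • h) :
    ((ν.withDensity f).withDensity g).normalize = (ν.withDensity h).normalize := by
  rw [← withDensity_mul _ hf hg, hfg, withDensity_smul _ hh, normalize_smul hc0 hctop]

lemma bind_of_not_aemeasurable {μ : Measure α} {κ : α → Measure β} (hκ : ¬AEMeasurable κ μ) :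
    μ.bind κ = 0 := by
  rw [bind, map_of_not_aemeasurable hκ, join_zero]

lemma normalize_bind {μ : Measure α} {κ : α → Measure β} (hκ : ∀ x, IsProbabilityMeasure (κ x)) :
    μ.normalize.bind κ = (μ.bind κ).normalize := by
  by_cases hκm : AEMeasurable κ μ
  · have hmass : μ.bind κ Set.univ = μ Set.univ := by simp [bind_apply .univ hκm]
    rw [normalize, normalize, bind_smul, hmass]
  · simp [normalize, bind_smul, bind_of_not_aemeasurable hκm]

lemma measurable_withDensity_right {h : β → ℝ≥0∞} (hh : Measurable h) :
    Measurable fun ν : Measure β => ν.withDensity h :=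
  measurable_of_measurable_coe _ fun s hs => by
    simp only [withDensity_apply _ hs, ← lintegral_indicator hs]
    exact measurable_lintegral (hh.indicator hs)

lemma _root_.Measurable.fun_smul_measure {F : α → ℝ≥0∞} {κ : α → Measure β} (hF : Measurable F)
    (hκ : Measurable κ) : Measurable fun x => F x • κ x :=
  measurable_of_measurable_coe _ fun s hs => by
    simp only [Measure.smul_apply, smul_eq_mul]
    exact hF.mul ((measurable_coe hs).comp hκ)

/- `P` is not assumed measurable, and `bind` along a map that is not a.e.-measurable is `0`;
these equivalences make both sides of the identities below degenerate together. -/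
lemma aemeasurable_withDensity_right_iff {μ : Measure α} {κ : α → Measure β} {h : β → ℝ≥0∞}
    (hh : Measurable h) (h0 : ∀ y, h y ≠ 0) (htop : ∀ y, h y ≠ ∞) :
    AEMeasurable (fun x => (κ x).withDensity h) μ ↔ AEMeasurable κ μ := by
  refine ⟨fun hκh => ?_, (measurable_withDensity_right hh).comp_aemeasurable⟩
  simpa only [Function.comp_def, withDensity_inv_same hh (ae_of_all _ h0) (ae_of_all _ htop)]
    using (measurable_withDensity_right (h := fun y => (h y)⁻¹) hh.inv).comp_aemeasurable hκh

lemma _root_.AEMeasurable.fun_smul_measure {μ : Measure α} {κ : α → Measure β} {F : α → ℝ≥0∞}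
    (hF : Measurable F) (hκ : AEMeasurable κ μ) : AEMeasurable (fun x => F x • κ x) μ :=
  ⟨_, hF.fun_smul_measure hκ.measurable_mk, hκ.ae_eq_mk.mono fun x hx => by simp only [hx]⟩

lemma aemeasurable_fun_smul_measure_iff {μ : Measure α} {κ : α → Measure β} {F : α → ℝ≥0∞}
    (hF : Measurable F) (hF0 : ∀ x, F x ≠ 0) (hFtop : ∀ x, F x ≠ ∞) :
    AEMeasurable (fun x => F x • κ x) μ ↔ AEMeasurable κ μ := by
  refine ⟨fun hFκ => ?_, AEMeasurable.fun_smul_measure hF⟩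
  convert hFκ.fun_smul_measure (F := fun x => (F x)⁻¹) hF.inv using 2 with x
  rw [smul_smul, ENNReal.inv_mul_cancel (hF0 x) (hFtop x), one_smul]

lemma bind_withDensity {μ : Measure α} {κ : α → Measure β} {h : β → ℝ≥0∞} (hh : Measurable h)
    (h0 : ∀ y, h y ≠ 0) (htop : ∀ y, h y ≠ ∞) :
    μ.bind (fun x => (κ x).withDensity h) = (μ.bind κ).withDensity h := by
  by_cases hκ : AEMeasurable κ μ
  · ext s hs
    rw [bind_apply hs ((aemeasurable_withDensity_right_iff hh h0 htop).2 hκ),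
      withDensity_apply _ hs, ← lintegral_indicator hs,
      lintegral_bind hκ (hh.indicator hs).aemeasurable]
    simp only [withDensity_apply _ hs, lintegral_indicator hs]
  · rw [bind_of_not_aemeasurable hκ, withDensity_zero_left,
      bind_of_not_aemeasurable (mt (aemeasurable_withDensity_right_iff hh h0 htop).1 hκ)]

lemma withDensity_bind_inv_smul {μ : Measure α} {κ : α → Measure β} {F : α → ℝ≥0∞}
    (hF : Measurable F) (hF0 : ∀ x, F x ≠ 0) (hFtop : ∀ x, F x ≠ ∞) :
    (μ.withDensity F).bind (fun x => (F x)⁻¹ • κ x) = μ.bind κ := by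
  have hinv := aemeasurable_fun_smul_measure_iff (μ := μ) (κ := κ) (F := fun x => (F x)⁻¹) hF.inv
    (fun x => ENNReal.inv_ne_zero.2 (hFtop x)) (fun x => ENNReal.inv_ne_top.2 (hF0 x))
  by_cases hκ : AEMeasurable κ μ
  · have hκ' := hinv.2 hκ
    ext s hs
    rw [bind_apply hs (hκ'.mono_ac (withDensity_absolutelyContinuous μ F)), bind_apply hs hκ,
      lintegral_withDensity_eq_lintegral_mul₀ hF.aemeasurable
        (g := fun x => ((F x)⁻¹ • κ x) s) ((measurable_coe hs).comp_aemeasurable hκ')]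
    refine lintegral_congr fun x => ?_
    rw [Pi.mul_apply, Measure.smul_apply, smul_eq_mul, ← mul_assoc,
      ENNReal.mul_inv_cancel (hF0 x) (hFtop x), one_mul]
  · have hac : μ ≪ μ.withDensity F :=
      withDensity_absolutelyContinuous' hF.aemeasurable (ae_of_all _ hF0)
    rw [bind_of_not_aemeasurable hκ,
      bind_of_not_aemeasurable fun h => hκ (hinv.1 (h.mono_ac hac))]

end MeasureTheory.Measure

section DoobTransform

open MeasureTheory.Measure

variable {α : Type*} [MeasurableSpace α]

def doobTransform (P : α → Measure α) (h : α → ℝ≥0∞) (x : α) : Measure α :=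
  (∫⁻ y, h y ∂P x)⁻¹ • (P x).withDensity h

lemma isProbabilityMeasure_doobTransform {P : α → Measure α} {h : α → ℝ≥0∞} {x : α}
    (h0 : ∫⁻ y, h y ∂P x ≠ 0) (htop : ∫⁻ y, h y ∂P x ≠ ∞) :
    IsProbabilityMeasure (doobTransform P h x) :=
  ⟨by rw [doobTransform, Measure.smul_apply, withDensity_apply _ .univ, restrict_univ, smul_eq_mul,
    ENNReal.inv_mul_cancel h0 htop]⟩

lemma normalize_withDensity_bind_doobTransform (ν : Measure α) {P : α → Measure α}
    {h : α → ℝ≥0∞} (hh : Measurable h) (h0 : ∀ y, h y ≠ 0) (htop : ∀ y, h y ≠ ∞)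
    (hPh : Measurable fun x => ∫⁻ y, h y ∂P x) (hPh0 : ∀ x, ∫⁻ y, h y ∂P x ≠ 0)
    (hPhtop : ∀ x, ∫⁻ y, h y ∂P x ≠ ∞) :
    (ν.withDensity fun x => ∫⁻ y, h y ∂P x).normalize.bind (doobTransform P h) =
      ((ν.bind P).withDensity h).normalize := by
  rw [normalize_bind fun x => isProbabilityMeasure_doobTransform (hPh0 x) (hPhtop x)]
  unfold doobTransform
  rw [withDensity_bind_inv_smul hPh hPh0 hPhtop, bind_withDensity hh h0 htop]

end DoobTransform

section Smoothing

open MeasureTheory.Measure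

variable {p : ℕ}

lemma reweight_eq_normalize (f : Euc p → ℝ) (μ : Measure (Euc p)) :
    reweight f μ = (μ.withDensity fun x => ENNReal.ofReal (f x)).normalize := by
  rw [Measure.normalize, withDensity_apply _ .univ, restrict_univ]
  rfl

lemma reweight_filterM {P : Euc p → Measure (Euc p)} {g : ℕ → Euc p → ℝ} {μ : Measure (Euc p)}
    {k : ℕ} (hden : chainMeas P g μ k Set.univ ≠ ⊤) (f : Euc p → ℝ) :
    reweight f (filterM P g μ k) = reweight f (chainMeas P g μ k) := by
  simp only [reweight_eq_normalize]
  exact normalize_withDensity_normalize hden _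

lemma RinfKer_eq_doobTransform {P : Euc p → Measure (Euc p)} {φ : ℕ → Euc p → ℝ} {k : ℕ}
    (hint : ∀ θ, Integrable (φ k) (P θ)) (hpos : ∀ θ, 0 ≤ φ k θ) :
    RinfKer P φ k = doobTransform P fun x => ENNReal.ofReal (φ k x) := by
  ext1 θ
  rw [RinfKer, doobTransform, ofReal_integral_eq_lintegral_ofReal (hint θ) (ae_of_all _ hpos)]

lemma integral_eq_div_of_eigen {P : Euc p → Measure (Euc p)} {g φ : ℕ → Euc p → ℝ} {ς : ℕ → ℝ}
    (hgpos : ∀ k θ, 0 < g k θ)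
    (heig : ∀ k θ, g k θ * ∫ x, φ (k + 1) x ∂(P θ) = ς k * φ k θ) (k : ℕ) :
    (fun θ => ∫ x, φ (k + 1) x ∂(P θ)) = fun θ => ς k * φ k θ / g k θ := by
  ext θ
  rw [eq_div_iff (hgpos k θ).ne', mul_comm, heig]

lemma reweight_filterM_succ {P : Euc p → Measure (Euc p)} {g : ℕ → Euc p → ℝ}
    (hgm : ∀ k, Measurable (g k)) (hgpos : ∀ k θ, 0 < g k θ)
    {φ : ℕ → Euc p → ℝ} (hφm : ∀ k, Measurable (φ k)) (hφpos : ∀ k θ, 0 < φ k θ)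
    {ς : ℕ → ℝ} (hς : ∀ k, 0 < ς k) (hinteg : ∀ k θ, Integrable (φ k) (P θ))
    (heig : ∀ k θ, g k θ * ∫ x, φ (k + 1) x ∂(P θ) = ς k * φ k θ)
    {μ : Measure (Euc p)} (hden : ∀ k, chainMeas P g μ k Set.univ ≠ ⊤) (k : ℕ) :
    reweight (fun θ => ∫ x, φ (k + 1 + 1) x ∂(P θ)) (filterM P g μ (k + 1)) =
      (reweight (fun θ => ∫ x, φ (k + 1) x ∂(P θ)) (filterM P g μ k)).bind
        (RinfKer P φ (k + 1)) := by
  set h : Euc p → ℝ≥0∞ := fun x => ENNReal.ofReal (φ (k + 1) x)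
  have hh : Measurable h := (hφm (k + 1)).ennreal_ofReal
  have hPh : ∀ θ, ENNReal.ofReal (∫ x, φ (k + 1) x ∂(P θ)) = ∫⁻ x, h x ∂(P θ) := fun θ =>
    ofReal_integral_eq_lintegral_ofReal (hinteg _ θ) (ae_of_all _ fun x => (hφpos _ x).le)
  have hPh_pos : ∀ θ, 0 < ∫ x, φ (k + 1) x ∂(P θ) := fun θ => by
    rw [congrFun (integral_eq_div_of_eigen hgpos heig k) θ]
    exact div_pos (mul_pos (hς k) (hφpos k θ)) (hgpos k θ)
  have hPhm : ∀ j, Measurable fun θ => ∫ x, φ (j + 1) x ∂(P θ) := fun j =>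
    integral_eq_div_of_eigen hgpos heig j ▸ (measurable_const.mul (hφm j)).div (hgm j)
  rw [reweight_filterM (hden (k + 1)), reweight_filterM (hden k), reweight_eq_normalize,
    reweight_eq_normalize, chainMeas, RinfKer_eq_doobTransform (hinteg _) fun θ => (hφpos _ θ).le,
    normalize_withDensity_withDensity_of_mul_eq_smul (hgm _).ennreal_ofReal
      (hPhm _).ennreal_ofReal hh (ENNReal.ofReal_pos.2 (hς (k + 1))).ne' ENNReal.ofReal_ne_top]
  · simp only [hPh]
    refine (normalize_withDensity_bind_doobTransform _ hh
      (fun x => (ENNReal.ofReal_pos.2 (hφpos _ x)).ne') (fun _ => ENNReal.ofReal_ne_top) ?_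
      (fun θ => hPh θ ▸ (ENNReal.ofReal_pos.2 (hPh_pos θ)).ne')
      (fun θ => hPh θ ▸ ENNReal.ofReal_ne_top)).symm
    simpa only [hPh] using (hPhm k).ennreal_ofReal
  · ext θ
    simp only [Pi.mul_apply, Pi.smul_apply, smul_eq_mul, h,
      ← ENNReal.ofReal_mul (hgpos _ θ).le, heig, ENNReal.ofReal_mul (hς _).le]

end Smoothing

theorem smoothing_measures_eq_composition_general
    {p : ℕ} (Δ : ℝ)
    (P : ℝ → Euc p → Measure (Euc p))
    (g : ℕ → Euc p → ℝ) (hgm : ∀ k, Measurable (g k)) (hgpos : ∀ k θ, 0 < g k θ)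
    (φ : ℕ → Euc p → ℝ) (hφm : ∀ k, Measurable (φ k)) (hφpos : ∀ k θ, 0 < φ k θ)
    (ς : ℕ → ℝ) (hς : ∀ k, 0 < ς k)
    (hinteg : ∀ k : ℕ, ∀ θ : Euc p, Integrable (φ k) (P Δ θ))
    (heig : ∀ k : ℕ, ∀ θ : Euc p,
      g k θ * ∫ x, φ (k + 1) x ∂(P Δ θ) = ς k * φ k θ)
    (μ : Measure (Euc p))
    (hden : ∀ k : ℕ, chainMeas (P Δ) g μ k Set.univ ≠ ⊤) :
    ∀ k : ℕ, 1 ≤ k →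
      reweight (fun θ => ∫ x, φ (k + 1) x ∂(P Δ θ)) (filterM (P Δ) g μ k) =
        (List.range k).foldl (fun m i => m.bind (RinfKer (P Δ) φ (i + 1)))
          (reweight (fun θ => ∫ x, φ 1 x ∂(P Δ θ)) (filterM (P Δ) g μ 0)) := by
  have hstep := reweight_filterM_succ hgm hgpos hφm hφpos hς hinteg heig hden
  intro k hk
  induction k, hk using Nat.le_induction with
  | base => exact hstep 0
  | succ n _ ih =>
    rw [List.range_succ, List.foldl_append, List.foldl_cons, List.foldl_nil, ← ih]
    exact hstep n

/-- **Lemma 3.2** (first part): the smoothing measures `π_{k,∞}^μ` satisfy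
`π_{k,∞}^μ = π_{0,∞}^μ R_{1,∞} ⋯ R_{k,∞}`. -/
theorem smoothing_measures_eq_composition
    {p : ℕ} (Δ : ℝ) (hΔ : 0 < Δ) (α : Euc p) (β : Matrix (Fin p) (Fin p) ℝ)
    (σ : ℝ) (hσ : 0 ≤ σ)
    (P : ℝ → Euc p → Measure (Euc p)) (hP : IsLinearSDEKernel P α β σ)
    (g : ℕ → Euc p → ℝ) (hgm : ∀ k, Measurable (g k)) (hgpos : ∀ k θ, 0 < g k θ)
    (φ : ℕ → Euc p → ℝ) (hφm : ∀ k, Measurable (φ k)) (hφpos : ∀ k θ, 0 < φ k θ)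
    (ς : ℕ → ℝ) (hς : ∀ k, 0 < ς k)
    (hinteg : ∀ k : ℕ, ∀ θ : Euc p, Integrable (φ k) (P Δ θ))
    (heig : ∀ k : ℕ, ∀ θ : Euc p,
      g k θ * ∫ x, φ (k + 1) x ∂(P Δ θ) = ς k * φ k θ)
    (μ : Measure (Euc p)) (hμ : IsProbabilityMeasure μ)
    (hden : ∀ k : ℕ, chainMeas (P Δ) g μ k Set.univ ≠ ⊤)
    (hfin : ∀ k : ℕ, Integrable (fun θ => ∫ x, φ (k + 1) x ∂(P Δ θ))
      (filterM (P Δ) g μ k)) :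
    ∀ k : ℕ, 1 ≤ k →
      reweight (fun θ => ∫ x, φ (k + 1) x ∂(P Δ θ)) (filterM (P Δ) g μ k) =
        (List.range k).foldl (fun m i => m.bind (RinfKer (P Δ) φ (i + 1)))
          (reweight (fun θ => ∫ x, φ 1 x ∂(P Δ θ)) (filterM (P Δ) g μ 0)) :=
  smoothing_measures_eq_composition_general Δ P g hgm hgpos φ hφm hφpos ς hς hinteg heig μ hden

end
end
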